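/- Let n ≥ 2 and let S_n(Sym_n) be the monoid presented by generators x_1,…,x_n and relations x_{σ(1)}x_{σ(2)}⋯x_{σ(n)} = x_1x_2⋯x_n for all σ ∈ Sym_n. Then for all i, j with 2 ≤ i, j ≤ n, the identity x_ε·x_i·x_j = x_ε·x_j·x_i holds in S_n(Sym_n), where x_ε = x_1x_2⋯x_n. -/

import Mathlib

/-- The word `x_{σ(1)} x_{σ(2)} ⋯ x_{σ(n)}` in the free monoid on `n` generators
(generator `x_j` is indexed by `j-1 : Fin n`). -/
def permWord {n : ℕ} (σ : Equiv.Perm (Fin n)) : FreeMonoid (Fin n) :=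
  FreeMonoid.ofList (List.ofFn fun i => σ i)

/-- The word `x_ε = x_1 x_2 ⋯ x_n`. -/
def epsWord (n : ℕ) : FreeMonoid (Fin n) :=
  FreeMonoid.ofList (List.ofFn fun i : Fin n => i)

/-- The defining relations `x_{σ(1)} ⋯ x_{σ(n)} = x_1 ⋯ x_n`, `σ ∈ Sym_n`. -/
def symRel (n : ℕ) : FreeMonoid (Fin n) → FreeMonoid (Fin n) → Prop :=
  fun a b => ∃ σ : Equiv.Perm (Fin n), a = permWord σ ∧ b = epsWord n

/-- The canonical projection from the free monoid onto `S_n(Sym_n)`. -/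
def proj (n : ℕ) : FreeMonoid (Fin n) →* PresentedMonoid (symRel n) :=
  PresentedMonoid.mk (symRel n)

/-- `u` contains a subword of the form `x_{σ(1)} ⋯ x_{σ(n)}` for some `σ ∈ Sym_n`. -/
def HasPermSubword {n : ℕ} (u : FreeMonoid (Fin n)) : Prop :=
  ∃ (σ : Equiv.Perm (Fin n)) (a b : FreeMonoid (Fin n)), u = a * permWord σ * b

/-- The word `x_1^{m_1} · x_ε · x_2^{m_2} ⋯ x_n^{m_n}` (0-indexed: `m i` is the
exponent of generator `i`). -/
def normalWord (n : ℕ) (h : 0 < n) (m : Fin n → ℕ) : FreeMonoid (Fin n) :=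
  FreeMonoid.ofList (List.replicate (m ⟨0, h⟩) ⟨0, h⟩) * epsWord n *
    FreeMonoid.ofList (((List.finRange n).drop 1).flatMap fun i => List.replicate (m i) i)

/-!
A word `a b` whose letters are a permutation of the generators equals `x_ε`. Hence if both `a b`
and `b c` are such words, then `a · x_ε = a (b c) = (a b) c = x_ε · c`. For `i ≠ j` take `a = x_i x_j`
and `b` the product of the remaining generators: `c = x_i x_j` shows that `x_i x_j` commutes with
`x_ε`, and `c = x_j x_i` gives `x_i x_j · x_ε = x_ε · x_j x_i`.
-/

lemma exists_permWord_eq_ofList {n : ℕ} {l : List (Fin n)} (hl : l.Perm (List.finRange n)) :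
    ∃ σ : Equiv.Perm (Fin n), permWord σ = FreeMonoid.ofList l := by
  have hlen : l.length = n := by simpa using hl.length_eq
  refine ⟨(finCongr hlen.symm).trans
    (List.Nodup.getEquivOfForallMemList l (hl.nodup_iff.mpr (List.nodup_finRange n))
      fun k => hl.mem_iff.mpr (List.mem_finRange k)), ?_⟩
  rw [permWord, List.ofFn_congr hlen.symm]
  simp

lemma proj_permWord {n : ℕ} (σ : Equiv.Perm (Fin n)) :
    proj n (permWord σ) = proj n (epsWord n) :=
  PresentedMonoid.mk_eq_mk_of_rel ⟨σ, rfl, rfl⟩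

lemma proj_ofList_of_perm {n : ℕ} {l : List (Fin n)} (hl : l.Perm (List.finRange n)) :
    proj n (FreeMonoid.ofList l) = proj n (epsWord n) := by
  obtain ⟨σ, hσ⟩ := exists_permWord_eq_ofList hl
  rw [← hσ, proj_permWord]

lemma proj_ofList_mul_eps {n : ℕ} {a b c : List (Fin n)}
    (hab : (a ++ b).Perm (List.finRange n)) (hbc : (b ++ c).Perm (List.finRange n)) :
    proj n (FreeMonoid.ofList a) * proj n (epsWord n) =
      proj n (epsWord n) * proj n (FreeMonoid.ofList c) :=
  calc proj n (FreeMonoid.ofList a) * proj n (epsWord n)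
      = proj n (FreeMonoid.ofList a) * proj n (FreeMonoid.ofList (b ++ c)) := by
        rw [proj_ofList_of_perm hbc]
    _ = proj n (FreeMonoid.ofList (a ++ b)) * proj n (FreeMonoid.ofList c) := by
        simp only [FreeMonoid.ofList_append, map_mul, mul_assoc]
    _ = proj n (epsWord n) * proj n (FreeMonoid.ofList c) := by
        rw [proj_ofList_of_perm hab]

lemma proj_of_mul_of {n : ℕ} (i j : Fin n) :
    proj n (FreeMonoid.of i) * proj n (FreeMonoid.of j) = proj n (FreeMonoid.ofList [i, j]) :=
  (map_mul _ _ _).symm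

theorem eps_mul_swap_general (n : ℕ) (i j : Fin n) :
    proj n (epsWord n) * proj n (FreeMonoid.of i) * proj n (FreeMonoid.of j) =
      proj n (epsWord n) * proj n (FreeMonoid.of j) * proj n (FreeMonoid.of i) := by
  rcases eq_or_ne i j with rfl | hij
  · rfl
  set r := ((List.finRange n).erase i).erase j
  have hijr : ([i, j] ++ r).Perm (List.finRange n) :=
    ((List.perm_cons_erase (List.mem_finRange i)).trans (.cons i (List.perm_cons_erase
      ((List.mem_erase_of_ne hij.symm).mpr (List.mem_finRange j))))).symm
  have hrij : (r ++ [i, j]).Perm (List.finRange n) := List.perm_append_comm.trans hijr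
  have hrji : (r ++ [j, i]).Perm (List.finRange n) :=
    (List.Perm.append_left r (.swap i j [])).trans hrij
  calc proj n (epsWord n) * proj n (FreeMonoid.of i) * proj n (FreeMonoid.of j)
      = proj n (epsWord n) * proj n (FreeMonoid.ofList [i, j]) := by
        rw [mul_assoc, proj_of_mul_of]
    _ = proj n (FreeMonoid.ofList [i, j]) * proj n (epsWord n) :=
        (proj_ofList_mul_eps hijr hrij).symm
    _ = proj n (epsWord n) * proj n (FreeMonoid.ofList [j, i]) := proj_ofList_mul_eps hijr hrji
    _ = proj n (epsWord n) * proj n (FreeMonoid.of j) * proj n (FreeMonoid.of i) := by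
        rw [mul_assoc, proj_of_mul_of]

/-- For all `i, j` with `2 ≤ i, j ≤ n` (0-indexed: values ≠ 0),
`x_ε · x_i · x_j = x_ε · x_j · x_i` holds in `S_n(Sym_n)`. -/
theorem eps_mul_swap (n : ℕ) (hn : 2 ≤ n) (i j : Fin n)
    (hi : i.val ≠ 0) (hj : j.val ≠ 0) :
    proj n (epsWord n) * proj n (FreeMonoid.of i) * proj n (FreeMonoid.of j) =
      proj n (epsWord n) * proj n (FreeMonoid.of j) * proj n (FreeMonoid.of i) :=
  eps_mul_swap_general n i j
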